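/- arXiv:2108.09990 — 5 statements merged into one kernel-verified Lean document; each statement's English description precedes it below -/
import Mathlib

section
/- Let r > 2/3 and let K(u;r) = 40u^3 − (50r + 169)u^2 + (160r + 224)u − 120r − 96. Then K(6/5;r) = −36/25, K(4/3;r) = (40/9)(r − 2/3), K(2;r) = −4, and K(·;r) has exactly one real root in each of the three intervals (6/5, 4/3), (4/3, 2) and (2, ∞). -/
noncomputable section

/-- The cubic `K(u;r)` whose roots give the `u`-coordinates of the intersections of the
nullclines of the pipe-flow traveling-wave model. -/
def Kc (u r : ℝ) : ℝ := 40*u^3 - (50*r + 169)*u^2 + (160*r + 224)*u - 120*r - 96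

/-! The signs `K(6/5) < 0 < K(4/3)`, `K(2) < 0 < K(2r+4)` give three roots by the intermediate
value theorem, and a cubic has no fourth root: by Vieta, three distinct roots of
`a u^3 + b u^2 + c u + d` sum to `-b/a`, so any two triples of distinct roots sharing two
members share the third. -/

section Cubic

variable {R : Type*} [CommRing R] [IsDomain R] {a b c d : R} {f : R → R}

theorem cubic_vieta_sum (hf : ∀ u, f u = a*u^3 + b*u^2 + c*u + d) {x y z : R}
    (hxy : x ≠ y) (hxz : x ≠ z) (hyz : y ≠ z) (hx : f x = 0) (hy : f y = 0) (hz : f z = 0) :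
    a*(x + y + z) + b = 0 := by
  have quadratic {s t : R} (hst : s ≠ t) (hs : f s = 0) (ht : f t = 0) :
      a*(s^2 + s*t + t^2) + b*(s + t) + c = 0 := by
    refine (mul_eq_zero.mp ?_).resolve_left (sub_ne_zero.mpr hst)
    linear_combination (hf s).symm.trans hs - (hf t).symm.trans ht
  refine (mul_eq_zero.mp ?_).resolve_left (sub_ne_zero.mpr hxy)
  linear_combination quadratic hxz hx hz - quadratic hyz hy hz

theorem cubic_root_trichotomy (ha : a ≠ 0) (hf : ∀ u, f u = a*u^3 + b*u^2 + c*u + d)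
    {x y z w : R} (hxy : x ≠ y) (hxz : x ≠ z) (hyz : y ≠ z)
    (hx : f x = 0) (hy : f y = 0) (hz : f z = 0) (hw : f w = 0) : w = x ∨ w = y ∨ w = z := by
  by_contra! ⟨hwx, hwy, hwz⟩
  have hsum := cubic_vieta_sum hf hxy hxz hyz hx hy hz
  have hsum' := cubic_vieta_sum hf hxy hwx.symm hwy.symm hx hy hw
  exact hwz (mul_left_cancel₀ ha (by linear_combination hsum' - hsum))

end Cubic

theorem Kc_eq (r u : ℝ) :
    Kc u r = 40*u^3 + (-(50*r + 169))*u^2 + (160*r + 224)*u + (-120*r - 96) := by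
  unfold Kc; ring

theorem continuous_Kc (r : ℝ) : Continuous (fun u ↦ Kc u r) := by
  unfold Kc; fun_prop

theorem Kc_two_mul_add_four_pos {r : ℝ} (hr : 0 < r) : 0 < Kc (2*r + 4) r := by
  unfold Kc; nlinarith [pow_pos hr 2, pow_pos hr 3]

theorem stmt0 (r : ℝ) (hr : 2/3 < r) :
    Kc (6/5) r = -36/25 ∧
    Kc (4/3) r = (40/9) * (r - 2/3) ∧
    Kc 2 r = -4 ∧
    (∃! u : ℝ, u ∈ Set.Ioo (6/5 : ℝ) (4/3) ∧ Kc u r = 0) ∧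
    (∃! u : ℝ, u ∈ Set.Ioo (4/3 : ℝ) 2 ∧ Kc u r = 0) ∧
    (∃! u : ℝ, u ∈ Set.Ioi (2 : ℝ) ∧ Kc u r = 0) := by
  have h₁ : Kc (6/5) r = -36/25 := by unfold Kc; ring
  have h₂ : Kc (4/3) r = (40/9) * (r - 2/3) := by unfold Kc; ring
  have h₃ : Kc 2 r = -4 := by unfold Kc; ring
  have h₂pos : 0 < Kc (4/3) r := by rw [h₂]; nlinarith
  obtain ⟨x, ⟨hx₁, hx₂⟩, hx⟩ : ∃ x ∈ Set.Ioo (6/5 : ℝ) (4/3), Kc x r = 0 :=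
    intermediate_value_Ioo (by norm_num) (continuous_Kc r).continuousOn
      ⟨by rw [h₁]; norm_num, h₂pos⟩
  obtain ⟨y, ⟨hy₁, hy₂⟩, hy⟩ : ∃ y ∈ Set.Ioo (4/3 : ℝ) 2, Kc y r = 0 :=
    intermediate_value_Ioo' (by norm_num) (continuous_Kc r).continuousOn
      ⟨by rw [h₃]; norm_num, h₂pos⟩
  obtain ⟨z, ⟨hz₁, -⟩, hz⟩ : ∃ z ∈ Set.Ioo (2 : ℝ) (2*r + 4), Kc z r = 0 :=
    intermediate_value_Ioo (by linarith) (continuous_Kc r).continuousOn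
      ⟨by rw [h₃]; norm_num, Kc_two_mul_add_four_pos (by linarith)⟩
  have roots (w : ℝ) (hw : Kc w r = 0) : w = x ∨ w = y ∨ w = z :=
    cubic_root_trichotomy (by norm_num) (Kc_eq r) (by linarith : x < y).ne
      (by linarith : x < z).ne (by linarith : y < z).ne hx hy hz hw
  refine ⟨h₁, h₂, h₃, ⟨x, ⟨⟨hx₁, hx₂⟩, hx⟩, ?_⟩, ⟨y, ⟨⟨hy₁, hy₂⟩, hy⟩, ?_⟩, ⟨z, ⟨hz₁, hz⟩, ?_⟩⟩
  · rintro w ⟨⟨hw₁, hw₂⟩, hw⟩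
    rcases roots w hw with rfl | rfl | rfl <;> first | rfl | linarith
  · rintro w ⟨⟨hw₁, hw₂⟩, hw⟩
    rcases roots w hw with rfl | rfl | rfl <;> first | rfl | linarith
  · rintro w ⟨hw₁ : 2 < w, hw⟩
    rcases roots w hw with rfl | rfl | rfl <;> first | rfl | linarith
end
end

section
/- Let u_b : (2/3, ∞) → ℝ be any function satisfying u_b(r) ∈ (6/5, 4/3) and K(u_b(r); r) = 0 for all r > 2/3. Then u_b(r) → 4/3 as r → (2/3)⁺ (limit from within (2/3,∞)) and u_b(r) → 6/5 as r → ∞. -/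
open Filter Topology

noncomputable section

/-!
Two rearrangements of `K(u;r) = 0` pin the root down. Multiplying by 3,
`30 (r - 2/3) (5u - 6)(2 - u) = (4 - 3u)(40u² - 149u + 132)`, and bounding both quadratics on
`(6/5, 4/3)` gives `4/3 - u ≤ r - 2/3`. Directly, `50 r (u - 6/5)(2 - u) = -(40u³ - 169u² + 224u - 96)`,
whose right side stays below `80/27` there, so `r (u - 6/5) ≤ 1/10`. Both limits follow by squeezing.
-/

open Set

lemma sub_le_of_Kc_eq_zero {u r : ℝ} (hu : u ∈ Ioo (6/5 : ℝ) (4/3)) (hK : Kc u r = 0) :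
    4/3 - u ≤ r - 2/3 := by
  obtain ⟨hu₁, hu₂⟩ := hu
  have hroot : 30 * (r - 2/3) * ((5*u - 6) * (2 - u)) = (4 - 3*u) * (40*u^2 - 149*u + 132) := by
    unfold Kc at hK; linear_combination 3 * hK
  have hQ : 40/9 ≤ 40*u^2 - 149*u + 132 := by nlinarith
  have hX : (5*u - 6) * (2 - u) ≤ 4/9 := by nlinarith
  have hX0 : 0 < (5*u - 6) * (2 - u) := by nlinarith
  have hr : 0 ≤ r - 2/3 := by
    by_contra! h
    nlinarith [mul_neg_of_neg_of_pos h hX0]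
  nlinarith [mul_le_mul_of_nonneg_left hX hr]

lemma mul_sub_le_of_Kc_eq_zero {u r : ℝ} (hu : u ∈ Ioo (6/5 : ℝ) (4/3)) (hK : Kc u r = 0) :
    r * (u - 6/5) ≤ 1/10 := by
  obtain ⟨hu₁, hu₂⟩ := hu
  have hroot : 50 * r * (u - 6/5) * (2 - u) = -(40*u^3 - 169*u^2 + 224*u - 96) := by
    unfold Kc at hK; linear_combination hK
  have hP : -(40*u^3 - 169*u^2 + 224*u - 96) ≤ 80/27 := by
    -- the difference is `(4 - 3u)(-(360u² - 1041u + 628)) / 27`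
    nlinarith [mul_pos (by linarith : (0:ℝ) < 4 - 3*u) (by nlinarith : (0:ℝ) < -(360*u^2 - 1041*u + 628))]
  have hP0 : 0 < -(40*u^3 - 169*u^2 + 224*u - 96) := by
    nlinarith [mul_pos (by linarith : (0:ℝ) < u - 6/5) (by nlinarith : (0:ℝ) < 1 - (u - 6/5))]
  have hr : 0 ≤ r * (u - 6/5) := by
    by_contra! h
    nlinarith [mul_neg_of_neg_of_pos h (by linarith : (0:ℝ) < 2 - u)]
  nlinarith [mul_le_mul_of_nonneg_left (by linarith : (2:ℝ)/3 ≤ 2 - u) hr]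

lemma tendsto_nhdsGT_of_Kc_eq_zero (ub : ℝ → ℝ)
    (hub : ∀ r : ℝ, 2/3 < r → ub r ∈ Ioo (6/5 : ℝ) (4/3) ∧ Kc (ub r) r = 0) :
    Tendsto ub (𝓝[>] (2/3)) (𝓝 (4/3)) := by
  have hlower : Tendsto (fun r : ℝ => 2 - r) (𝓝[>] (2/3)) (𝓝 (4/3)) := by
    exact ((continuous_const.sub continuous_id).tendsto' (2/3 : ℝ) (4/3) (by norm_num)).mono_left
      nhdsWithin_le_nhds
  refine tendsto_of_tendsto_of_tendsto_of_le_of_le' hlower tendsto_const_nhds ?_ ?_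
  all_goals filter_upwards [self_mem_nhdsWithin] with r hr
  · linarith [sub_le_of_Kc_eq_zero (hub r hr).1 (hub r hr).2]
  · exact (hub r hr).1.2.le

lemma tendsto_atTop_of_Kc_eq_zero (ub : ℝ → ℝ)
    (hub : ∀ r : ℝ, 2/3 < r → ub r ∈ Ioo (6/5 : ℝ) (4/3) ∧ Kc (ub r) r = 0) :
    Tendsto ub atTop (𝓝 (6/5)) := by
  have hupper : Tendsto (fun r : ℝ => 6/5 + r⁻¹ / 10) atTop (𝓝 (6/5)) := by
    simpa using (tendsto_inv_atTop_zero.div_const 10).const_add (6/5 : ℝ)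
  refine tendsto_of_tendsto_of_tendsto_of_le_of_le' tendsto_const_nhds hupper ?_ ?_
  all_goals filter_upwards [eventually_gt_atTop (2/3 : ℝ)] with r hr
  · exact (hub r hr).1.1.le
  · have hbound := mul_sub_le_of_Kc_eq_zero (hub r hr).1 (hub r hr).2
    rw [← le_div_iff₀' (by linarith)] at hbound
    have hswap : r⁻¹ / 10 = 1/10 / r := by ring
    linarith

theorem stmt2 (ub : ℝ → ℝ)
    (hub : ∀ r : ℝ, 2/3 < r → ub r ∈ Set.Ioo (6/5 : ℝ) (4/3) ∧ Kc (ub r) r = 0) :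
    Tendsto ub (nhdsWithin (2/3) (Set.Ioi (2/3))) (nhds (4/3)) ∧
    Tendsto ub atTop (nhds (6/5)) :=
  ⟨tendsto_nhdsGT_of_Kc_eq_zero ub hub, tendsto_atTop_of_Kc_eq_zero ub hub⟩
end
end

section
/- Let r > 2/3, D > 0 and μ ∈ ℝ satisfy 2 + μ = (1/2)·√(2D(r + 1/10))·(q_{f,+}(r) − 2q_{f,−}(r)). Define q_f(ξ) = q_{f,+}(r)·φ(q_{f,+}(r)·√((r + 1/10)/D)·ξ). Then q_f is smooth and satisfies D·q_f″(ξ) = (2 + μ)·q_f′(ξ) − f(q_f(ξ), 2; r) for all ξ ∈ ℝ; moreover q_f is strictly increasing, q_f(ξ) → 0 as ξ → −∞, and q_f(ξ) → q_{f,+}(r) as ξ → +∞. (Thus (q_f, q_f′, 2) is a heteroclinic front of the fast subsystem in the layer u = 2, connecting (0,0,2) to (q_{f,+}(r),0,2).) -/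
open Filter Topology

noncomputable section

/-- Reaction term `f(q,u;r)` of the pipe-flow model. -/
def fq (q u r : ℝ) : ℝ := q * (r + u - 2 - (r + 1/10) * (q - 1)^2)

/-- The Nagumo front profile `φ(χ) = 1/(1 + exp(−χ/√2))`. -/
def phi (χ : ℝ) : ℝ := 1 / (1 + Real.exp (-χ / Real.sqrt 2))

/-- `q_{f,+}(r) = 1 + √(r/(r + 1/10))`. -/
def qfp (r : ℝ) : ℝ := 1 + Real.sqrt (r / (r + 1/10))

/-- `q_{f,−}(r) = 1 − √(r/(r + 1/10))`. -/
def qfm (r : ℝ) : ℝ := 1 - Real.sqrt (r / (r + 1/10))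

lemma one_add_exp_pos (x : ℝ) : 0 < 1 + Real.exp x := by positivity

lemma phi_eq (χ : ℝ) : phi χ = (1 + Real.exp (-χ / Real.sqrt 2))⁻¹ := by
  rw [phi, one_div]

lemma hasDerivAt_phi (χ : ℝ) :
    HasDerivAt phi ((Real.sqrt 2)⁻¹ * (phi χ * (1 - phi χ))) χ := by
  have hs : (0:ℝ) < Real.sqrt 2 := by positivity
  have h1 : HasDerivAt (fun x : ℝ => -x / Real.sqrt 2) (-(Real.sqrt 2)⁻¹) χ := by
    simpa [neg_div, div_eq_mul_inv] using ((hasDerivAt_id χ).neg.div_const (Real.sqrt 2))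
  have hE : HasDerivAt (fun x : ℝ => Real.exp (-x / Real.sqrt 2))
      (Real.exp (-χ / Real.sqrt 2) * -(Real.sqrt 2)⁻¹) χ := by
    exact h1.exp
  have hden : HasDerivAt (fun x : ℝ => 1 + Real.exp (-x / Real.sqrt 2))
      (Real.exp (-χ / Real.sqrt 2) * -(Real.sqrt 2)⁻¹) χ := hE.const_add 1
  have hne : 1 + Real.exp (-χ / Real.sqrt 2) ≠ 0 := (one_add_exp_pos _).ne'
  have hinv := hden.inv hne
  have : phi = fun x => (1 + Real.exp (-x / Real.sqrt 2))⁻¹ := funext phi_eq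
  rw [this]
  refine hinv.congr_deriv ?_
  beta_reduce
  have hsne : Real.sqrt 2 ≠ 0 := hs.ne'
  field_simp
  ring

lemma phi_contDiff : ContDiff ℝ (⊤ : ℕ∞) phi := by
  unfold phi
  apply ContDiff.div contDiff_const
  · exact contDiff_const.add (Real.contDiff_exp.comp (contDiff_id.neg.div_const _))
  · exact fun x => (one_add_exp_pos _).ne'

lemma phi_strictMono : StrictMono phi := by
  intro x y hxy
  have hs : (0:ℝ) < Real.sqrt 2 := by positivity
  have h1 : -y / Real.sqrt 2 < -x / Real.sqrt 2 := by
    apply div_lt_div_of_pos_right (by linarith) hs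
  have h2 : Real.exp (-y / Real.sqrt 2) < Real.exp (-x / Real.sqrt 2) :=
    Real.exp_lt_exp.mpr h1
  rw [phi, phi]
  apply one_div_lt_one_div_of_lt (one_add_exp_pos _)
  linarith

lemma phi_tendsto_atBot : Tendsto phi atBot (nhds 0) := by
  have h1 : Tendsto (fun χ : ℝ => -χ / Real.sqrt 2) atBot atTop :=
    (tendsto_neg_atBot_atTop).atTop_div_const (by positivity)
  have h3 : Tendsto (fun χ : ℝ => 1 + Real.exp (-χ / Real.sqrt 2)) atBot atTop :=
    tendsto_atTop_add_const_left _ 1 (Real.tendsto_exp_atTop.comp h1)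
  have := h3.inv_tendsto_atTop
  have he : phi = (fun χ : ℝ => 1 + Real.exp (-χ / Real.sqrt 2))⁻¹ := by
    funext χ; exact phi_eq χ
  rw [he]; exact this

lemma phi_tendsto_atTop : Tendsto phi atTop (nhds 1) := by
  have h1 : Tendsto (fun χ : ℝ => -χ / Real.sqrt 2) atTop atBot :=
    (tendsto_neg_atTop_atBot).atBot_div_const (by positivity)
  have h2 : Tendsto (fun χ : ℝ => Real.exp (-χ / Real.sqrt 2)) atTop (nhds 0) :=
    Real.tendsto_exp_atBot.comp h1
  have h3 : Tendsto (fun χ : ℝ => 1 + Real.exp (-χ / Real.sqrt 2)) atTop (nhds 1) := by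
    simpa using tendsto_const_nhds.add h2
  have h4 := h3.inv₀ (by norm_num : (1:ℝ) ≠ 0)
  rw [inv_one] at h4
  have he : phi = fun χ : ℝ => (1 + Real.exp (-χ / Real.sqrt 2))⁻¹ := by
    funext χ; exact phi_eq χ
  rw [he]; exact h4

theorem stmt5 (r D μ : ℝ) (hr : 2/3 < r) (hD : 0 < D)
    (hmatch : 2 + μ = (1/2) * Real.sqrt (2*D*(r + 1/10)) * (qfp r - 2 * qfm r)) :
    let qf : ℝ → ℝ := fun ξ => qfp r * phi (qfp r * Real.sqrt ((r + 1/10) / D) * ξ)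
    ContDiff ℝ (⊤ : ℕ∞) qf ∧
    (∀ ξ : ℝ, D * deriv (deriv qf) ξ = (2 + μ) * deriv qf ξ - fq (qf ξ) 2 r) ∧
    StrictMono qf ∧
    Tendsto qf atBot (nhds 0) ∧
    Tendsto qf atTop (nhds (qfp r)) := by
  intro qf
  set k : ℝ := r + 1/10 with hk_def
  have hk : 0 < k := by rw [hk_def]; linarith
  set a : ℝ := qfp r with ha_def
  have ha1 : 1 ≤ a := by
    rw [ha_def, qfp]; have := Real.sqrt_nonneg (r / (r + 1/10)); linarith
  have ha : 0 < a := by linarith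
  set c : ℝ := a * Real.sqrt (k / D) with hc_def
  have hcpos : 0 < c := by
    rw [hc_def]
    have : 0 < Real.sqrt (k / D) := Real.sqrt_pos.mpr (div_pos hk hD)
    positivity
  have hqf_eq : qf = fun ξ => a * phi (c * ξ) := rfl
  -- derivative facts
  have hP : ∀ ξ : ℝ, HasDerivAt (fun ξ : ℝ => phi (c * ξ))
      (c * ((Real.sqrt 2)⁻¹ * (phi (c*ξ) * (1 - phi (c*ξ))))) ξ := by
    intro ξ
    have h1 : HasDerivAt (fun ξ : ℝ => c * ξ) c ξ := by
      simpa using (hasDerivAt_id ξ).const_mul c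
    have h2 := (hasDerivAt_phi (c * ξ)).comp ξ h1
    refine h2.congr_deriv ?_
    ring
  have hqf' : ∀ ξ : ℝ, HasDerivAt qf
      (a * (c * ((Real.sqrt 2)⁻¹ * (phi (c*ξ) * (1 - phi (c*ξ)))))) ξ :=
    fun ξ => (hP ξ).const_mul a
  have hderiv1 : deriv qf = fun ξ =>
      a * (c * ((Real.sqrt 2)⁻¹ * (phi (c*ξ) * (1 - phi (c*ξ))))) :=
    funext fun ξ => (hqf' ξ).deriv
  refine ⟨?_, ?_, ?_, ?_, ?_⟩
  · -- smoothness
    rw [hqf_eq]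
    exact contDiff_const.mul (phi_contDiff.comp (contDiff_const.mul contDiff_id))
  · -- ODE
    intro ξ
    set s : ℝ := phi (c * ξ) with hs_def
    have hF : HasDerivAt (fun ξ => a * (c * ((Real.sqrt 2)⁻¹ * (phi (c*ξ) * (1 - phi (c*ξ))))))
        (a * (c * ((Real.sqrt 2)⁻¹ *
          ((c * ((Real.sqrt 2)⁻¹ * (s * (1 - s)))) * (1 - s) +
            s * (-(c * ((Real.sqrt 2)⁻¹ * (s * (1 - s))))))))) ξ :=
      ((((hP ξ).mul ((hP ξ).const_sub 1)).const_mul ((Real.sqrt 2)⁻¹)).const_mul c).const_mul a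
    have hd2 : deriv (deriv qf) ξ = a * (c * ((Real.sqrt 2)⁻¹ *
          ((c * ((Real.sqrt 2)⁻¹ * (s * (1 - s)))) * (1 - s) +
            s * (-(c * ((Real.sqrt 2)⁻¹ * (s * (1 - s)))))))) := by
      rw [hderiv1]; exact hF.deriv
    have hd1 : deriv qf ξ = a * (c * ((Real.sqrt 2)⁻¹ * (s * (1 - s)))) := by
      rw [hderiv1]
    have hqfξ : qf ξ = a * s := rfl
    -- algebra
    have ht : Real.sqrt 2 * Real.sqrt 2 = 2 := Real.mul_self_sqrt (by norm_num)
    have hts : Real.sqrt 2 ≠ 0 := by positivity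
    have hinv : (Real.sqrt 2)⁻¹ = Real.sqrt 2 / 2 := by
      field_simp
      exact (Real.sq_sqrt (by norm_num)).symm
    have hc2 : D * c ^ 2 = a ^ 2 * k := by
      rw [hc_def, mul_pow, Real.sq_sqrt (le_of_lt (div_pos hk hD))]
      field_simp
    have hsc : Real.sqrt (2*D*k) * c = Real.sqrt 2 * (a * k) := by
      rw [hc_def, show Real.sqrt (2*D*k) * (a * Real.sqrt (k / D))
            = a * (Real.sqrt (2*D*k) * Real.sqrt (k / D)) from by ring,
          ← Real.sqrt_mul (by positivity)]
      have h : 2 * D * k * (k / D) = 2 * k ^ 2 := by field_simp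
      rw [h, Real.sqrt_mul (by norm_num), Real.sqrt_sq hk.le]
      ring
    have hrk : k * (a - 1) ^ 2 = r := by
      rw [ha_def, qfp, ← hk_def]
      have : (1 + Real.sqrt (r / k) - 1) ^ 2 = r / k := by
        rw [add_sub_cancel_left]
        exact Real.sq_sqrt (by positivity)
      rw [this]
      field_simp [hk.ne']
    have hqfm : qfm r = 2 - a := by
      rw [ha_def, qfm, qfp]; ring
    rw [hd2, hd1, hqfξ, fq, hmatch, hqfm, ← hk_def, hinv]
    linear_combination (a*s*(1-s)*(1-2*s)*(Real.sqrt 2)^2/4) * hc2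
      + (a^3*k*s*(1-s)*(1-2*s)/4 - (3*a-4)*a^2*k*s*(1-s)/4) * ht
      + (-((3*a-4)*a*(Real.sqrt 2)*s*(1-s)/4)) * hsc
      + (-(a*s)) * hrk
  · -- strict mono
    intro x y hxy
    have : phi (c * x) < phi (c * y) := phi_strictMono (mul_lt_mul_of_pos_left hxy hcpos)
    exact mul_lt_mul_of_pos_left this ha
  · -- atBot
    have hcb : Tendsto (fun ξ : ℝ => c * ξ) atBot atBot := by
      simpa using tendsto_id.const_mul_atBot hcpos
    have := (phi_tendsto_atBot.comp hcb).const_mul a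
    simpa [hqf_eq, Function.comp] using this
  · -- atTop
    have hct : Tendsto (fun ξ : ℝ => c * ξ) atTop atTop := by
      simpa using tendsto_id.const_mul_atTop hcpos
    have := (phi_tendsto_atTop.comp hct).const_mul a
    simpa [hqf_eq, Function.comp] using this
end
end

section
/- Let r > 2/3, let u_b ∈ ℝ satisfy r + u_b − 2 > 0, and let D > 0 and μ ∈ ℝ satisfy u_b + μ = −(1/2)·√(2D(r + 1/10))·(q_{b,+}(r,u_b) − 2q_{b,−}(r,u_b)). Define q_b(ξ) = q_{b,+}(r,u_b)·φ(−q_{b,+}(r,u_b)·√((r + 1/10)/D)·ξ). Then q_b is smooth and satisfies D·q_b″(ξ) = (u_b + μ)·q_b′(ξ) − f(q_b(ξ), u_b; r) for all ξ ∈ ℝ; moreover q_b is strictly decreasing, q_b(ξ) → q_{b,+}(r,u_b) as ξ → −∞, and q_b(ξ) → 0 as ξ → +∞. (Thus (q_b, q_b′, u_b) is a heteroclinic back of the fast subsystem in the layer u = u_b, connecting (q_{b,+},0,u_b) to (0,0,u_b).) -/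
open Filter Topology

noncomputable section

/-- `q_{b,+}(r,u) = 1 + √((r + u − 2)/(r + 1/10))`. -/
def qbp (r u : ℝ) : ℝ := 1 + Real.sqrt ((r + u - 2) / (r + 1/10))

/-- `q_{b,−}(r,u) = 1 − √((r + u − 2)/(r + 1/10))`. -/
def qbm (r u : ℝ) : ℝ := 1 - Real.sqrt ((r + u - 2) / (r + 1/10))

theorem stmt6 (r ub D μ : ℝ) (hr : 2/3 < r) (hub : 0 < r + ub - 2) (hD : 0 < D)
    (hmatch : ub + μ =
      -(1/2) * Real.sqrt (2*D*(r + 1/10)) * (qbp r ub - 2 * qbm r ub)) :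
    let qb : ℝ → ℝ :=
      fun ξ => qbp r ub * phi (-(qbp r ub) * Real.sqrt ((r + 1/10) / D) * ξ)
    ContDiff ℝ (⊤ : ℕ∞) qb ∧
    (∀ ξ : ℝ, D * deriv (deriv qb) ξ = (ub + μ) * deriv qb ξ - fq (qb ξ) ub r) ∧
    StrictAnti qb ∧
    Tendsto qb atBot (nhds (qbp r ub)) ∧
    Tendsto qb atTop (nhds 0) := by
  intro qb
  have hk : (0:ℝ) < r + 1/10 := by linarith
  set k : ℝ := r + 1/10 with hkdef
  set s : ℝ := Real.sqrt ((r + ub - 2)/k) with hsdef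
  have hs0 : 0 < s := Real.sqrt_pos.2 (div_pos hub hk)
  have hks : k * s^2 = r + ub - 2 := by
    rw [hsdef, Real.sq_sqrt (le_of_lt (div_pos hub hk))]
    field_simp
  set a : ℝ := 1 + s with hadef
  have ha : 0 < a := by linarith
  have hqbp : qbp r ub = a := by simp only [qbp, hadef, hsdef, hkdef]
  set c : ℝ := Real.sqrt (k / D) with hcdef
  have hc0 : 0 < c := Real.sqrt_pos.2 (div_pos hk hD)
  have hc2 : c^2 = k / D := Real.sq_sqrt (div_pos hk hD).le
  set b : ℝ := a * c / Real.sqrt 2 with hbdef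
  have hsqrt2 : (0:ℝ) < Real.sqrt 2 := by positivity
  have hsqrt2sq : (Real.sqrt 2)^2 = 2 := Real.sq_sqrt (by norm_num)
  have hb0 : 0 < b := by positivity
  have hDb2 : D * b^2 = a^2 * k / 2 := by
    rw [hbdef, div_pow, mul_pow, hc2, hsqrt2sq]
    field_simp
  have hsqrtmul : Real.sqrt (2*D*k) * c = Real.sqrt 2 * k := by
    rw [hcdef, ← Real.sqrt_mul (by positivity)]
    rw [show 2*D*k*(k/D) = 2 * k^2 by field_simp]
    rw [Real.sqrt_mul (by norm_num), Real.sqrt_sq hk.le]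
  have hM : ub + μ = a * k * (1 - 3*s) / (2*b) := by
    have hqm : qbp r ub - 2 * qbm r ub = 3*s - 1 := by
      simp only [qbp, qbm, hsdef, hkdef]; ring
    rw [eq_div_iff (by positivity : (2*b) ≠ 0), hmatch, hqm, hbdef]
    rw [show -(1/2) * Real.sqrt (2*D*k) * (3*s-1) * (2*(a*c/Real.sqrt 2))
        = -(3*s-1)*a/Real.sqrt 2 * (Real.sqrt (2*D*k)*c) from by ring, hsqrtmul]
    rw [show -(3*s-1)*a/Real.sqrt 2 * (Real.sqrt 2 * k)
        = -(3*s-1)*a*k*(Real.sqrt 2/Real.sqrt 2) from by ring, div_self hsqrt2.ne']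
    ring
  have hcc : Real.sqrt ((r + 1/10) / D) = c := by rw [hcdef, hkdef]
  have harg : ∀ ξ : ℝ, -(-(qbp r ub) * Real.sqrt ((r + 1/10) / D) * ξ) / Real.sqrt 2
      = b * ξ := by
    intro ξ
    rw [hqbp, hcc, hbdef]
    ring
  have hqb : ∀ ξ, qb ξ = a * (1 + Real.exp (b*ξ))⁻¹ := by
    intro ξ
    simp only [qb, phi]
    rw [harg ξ, hqbp, one_div]
  have hqbfun : qb = fun ξ => a * (1 + Real.exp (b*ξ))⁻¹ := funext hqb
  have hd1 : ∀ ξ : ℝ, HasDerivAt (fun ξ => a * (1 + Real.exp (b*ξ))⁻¹)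
      (-(a*b) * Real.exp (b*ξ) / (1 + Real.exp (b*ξ))^2) ξ := by
    intro ξ
    have hne : (1 + Real.exp (b*ξ)) ≠ 0 := by positivity
    have h1 : HasDerivAt (fun ξ : ℝ => b * ξ) b ξ := by
      simpa using (hasDerivAt_id ξ).const_mul b
    have h2 := (Real.hasDerivAt_exp (b*ξ)).comp ξ h1
    have h3 : HasDerivAt (fun ξ : ℝ => 1 + Real.exp (b*ξ)) (Real.exp (b*ξ) * b) ξ :=
      h2.const_add 1
    have h5 := (h3.inv hne).const_mul a
    convert h5 using 1
    · rfl
    · rfl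
    · rfl
    field_simp
  have hd2 : ∀ ξ : ℝ, HasDerivAt (fun ξ => -(a*b) * Real.exp (b*ξ) / (1 + Real.exp (b*ξ))^2)
      (-(a*b^2) * Real.exp (b*ξ) * (1 - Real.exp (b*ξ)) / (1 + Real.exp (b*ξ))^3) ξ := by
    intro ξ
    have hne : (1 + Real.exp (b*ξ)) ≠ 0 := by positivity
    have h1 : HasDerivAt (fun ξ : ℝ => b * ξ) b ξ := by
      simpa using (hasDerivAt_id ξ).const_mul b
    have h2 := (Real.hasDerivAt_exp (b*ξ)).comp ξ h1
    have hnum := h2.const_mul (-(a*b))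
    have h3 : HasDerivAt (fun ξ : ℝ => 1 + Real.exp (b*ξ)) (Real.exp (b*ξ) * b) ξ :=
      h2.const_add 1
    have hden := h3.pow 2
    have hdiv := hnum.div hden (pow_ne_zero 2 hne)
    convert hdiv using 1
    · rfl
    · rfl
    · rfl
    simp only [Pi.pow_apply, Function.comp_apply]
    field_simp
    ring
  have hderiv1 : deriv qb = fun ξ => -(a*b) * Real.exp (b*ξ) / (1 + Real.exp (b*ξ))^2 := by
    funext ξ; rw [hqbfun]; exact (hd1 ξ).deriv
  have hderiv2 : ∀ ξ : ℝ, deriv (deriv qb) ξ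
      = -(a*b^2) * Real.exp (b*ξ) * (1 - Real.exp (b*ξ)) / (1 + Real.exp (b*ξ))^3 := by
    intro ξ; rw [hderiv1]; exact (hd2 ξ).deriv
  refine ⟨?_, ?_, ?_, ?_, ?_⟩
  · rw [hqbfun]
    have hc1 : ContDiff ℝ (⊤ : ℕ∞) (fun ξ : ℝ => 1 + Real.exp (b*ξ)) :=
      contDiff_const.add (Real.contDiff_exp.comp (contDiff_const.mul contDiff_id))
    exact contDiff_const.mul (hc1.inv (fun x => by positivity))
  · intro ξ
    rw [hderiv2 ξ, hderiv1]
    simp only [fq, hqb ξ]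
    rw [hM, ← hkdef, show r + ub - 2 = k * s^2 from hks.symm,
      show D = a^2*k/(2*b^2) by field_simp at hDb2 ⊢; linarith, hadef]
    have hne : (1 + Real.exp (b*ξ)) ≠ 0 := by positivity
    field_simp
    ring
  · apply strictAnti_of_deriv_neg
    intro x
    rw [hderiv1]
    have hE := Real.exp_pos (b*x)
    have h1 : (0:ℝ) < (1 + Real.exp (b*x))^2 := by positivity
    apply div_neg_of_neg_of_pos _ h1
    nlinarith [mul_pos ha hb0]
  · rw [hqbfun, hqbp]
    have h1 : Tendsto (fun ξ : ℝ => b * ξ) atBot atBot := by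
      exact tendsto_id.const_mul_atBot hb0
    have h2 : Tendsto (fun ξ : ℝ => Real.exp (b*ξ)) atBot (nhds 0) :=
      Real.tendsto_exp_atBot.comp h1
    have h3 : Tendsto (fun ξ : ℝ => 1 + Real.exp (b*ξ)) atBot (nhds 1) := by
      simpa using h2.const_add 1
    have h4 := h3.inv₀ one_ne_zero
    simpa using h4.const_mul a
  · rw [hqbfun]
    have h1 : Tendsto (fun ξ : ℝ => b * ξ) atTop atTop := tendsto_id.const_mul_atTop hb0
    have h2 := Real.tendsto_exp_atTop.comp h1
    have h3 : Tendsto (fun ξ : ℝ => 1 + Real.exp (b*ξ)) atTop atTop :=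
      tendsto_atTop_add_const_left _ 1 h2
    have h4 := tendsto_inv_atTop_zero.comp h3
    simpa using h4.const_mul a
end
end

section
/- Let r > 2/3, D > 0, μ ∈ ℝ, u₂ ∈ (6/5, 4/3) with r + u₂ − 2 > 0, s < u₂, and q₂ = 1 + √((r + u₂ − 2)/(r + 1/10)). For ε ≥ 0 let J(ε) be the real 3×3 matrix with rows (0, 1, 0), (2(r + 1/10)·q₂·(q₂ − 1)/D, (u₂+μ)/D, −q₂/D), (2ε(1 − u₂)/(u₂ − s), 0, −ε(1 + 2q₂)/(u₂ − s)) (the linearization of the traveling-wave system at the turbulent equilibrium X₂ = (q₂, 0, u₂)). Then there exists ε₀ > 0 such that for all ε ∈ (0, ε₀) the characteristic polynomial of J(ε) has three distinct real roots λ₁ < λ₂ < 0 < λ₃ satisfying λ₂ + λ₃ > 0. (Thus X₂ is hyperbolic and relatively expansive.) -/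
/-!
The characteristic polynomial of `J ε` is `X * (X² - b X - a) + ε g` with `a > 0`, `deg g ≤ 2`
and `g 0 < 0`. The cubic `x (x² - b x - a)` has strict signs `-, +, -, +` at `-c, -η, η, c` for
suitable `0 < η < c`; these survive a small perturbation, and the perturbation makes the value
at `0` negative. The intermediate value theorem then puts three roots in `(-c, -η)`, `(-η, 0)`
and `(η, c)`, so `λ₂ + λ₃ > -η + η = 0`.
-/

open Polynomial Filter Topology

theorem charpoly_of_sparse_fin_three {R : Type*} [CommRing R] (a b c d e : R) :
    (Matrix.of ![![0, 1, 0], ![a, b, c], ![d, 0, e]]).charpoly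
      = (X - C e) * (X ^ 2 - C b * X - C a) - C (c * d) := by
  rw [Matrix.charpoly, Matrix.det_fin_three]
  simp only [Matrix.charmatrix_apply_eq, Matrix.charmatrix_apply_ne, ne_eq, Fin.reduceEq,
    not_false_eq_true, Matrix.of_apply, Matrix.cons_val', Matrix.cons_val_zero,
    Matrix.cons_val_one, Matrix.cons_val, Matrix.cons_val_fin_one, map_zero, map_one, map_mul]
  ring

theorem Polynomial.IsMonicOfDegree.eq_prod_X_sub_C_of_isRoot {R : Type*} [CommRing R]
    [IsDomain R] {P : R[X]} (hP : P.IsMonicOfDegree 3) {x y z : R}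
    (hxy : x ≠ y) (hxz : x ≠ z) (hyz : y ≠ z)
    (hx : P.IsRoot x) (hy : P.IsRoot y) (hz : P.IsRoot z) :
    P = (X - C x) * (X - C y) * (X - C z) := by
  classical
  have hQ : ((X - C x) * (X - C y) * (X - C z)).IsMonicOfDegree 3 :=
    ((isMonicOfDegree_X_sub_one x).mul (isMonicOfDegree_X_sub_one y)).mul
      (isMonicOfDegree_X_sub_one z)
  refine eq_of_degree_sub_lt_of_eval_finset_eq {x, y, z} ?_ ?_
  · rw [Finset.card_eq_three.mpr ⟨x, y, z, hxy, hxz, hyz, rfl⟩]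
    exact degree_le_natDegree.trans_lt (by exact_mod_cast hP.natDegree_sub_lt three_ne_zero hQ)
  · simp_all [IsRoot]

theorem exists_roots_of_sign_changes {P : ℝ[X]} (hP : P.IsMonicOfDegree 3) {η c : ℝ}
    (hη : 0 < η) (hηc : η < c)
    (hc_neg : P.eval (-c) < 0) (hη_neg : 0 < P.eval (-η)) (h0 : P.eval 0 < 0)
    (hη_pos : P.eval η < 0) (hc_pos : 0 < P.eval c) :
    ∃ l1 l2 l3 : ℝ, l1 < l2 ∧ l2 < 0 ∧ 0 < l3 ∧ 0 < l2 + l3 ∧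
      P = (X - C l1) * (X - C l2) * (X - C l3) := by
  have hcont : ∀ s, ContinuousOn (fun x => P.eval x) s := fun _ => P.continuous.continuousOn
  obtain ⟨l1, ⟨h1l, h1r⟩, hl1⟩ :=
    intermediate_value_Ioo (by linarith : -c ≤ -η) (hcont _) ⟨hc_neg, hη_neg⟩
  obtain ⟨l2, ⟨h2l, h2r⟩, hl2⟩ :=
    intermediate_value_Ioo' (by linarith : -η ≤ 0) (hcont _) ⟨h0, hη_neg⟩
  obtain ⟨l3, ⟨h3l, h3r⟩, hl3⟩ :=
    intermediate_value_Ioo hηc.le (hcont _) ⟨hη_pos, hc_pos⟩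
  refine ⟨l1, l2, l3, by linarith, h2r, by linarith, by linarith, ?_⟩
  exact hP.eq_prod_X_sub_C_of_isRoot (by linarith) (by linarith) (by linarith) hl1 hl2 hl3

theorem sq_sub_mul_sub_neg {a b x : ℝ} (ha : 0 < a) (hx : |x| ≤ a / (|b| + a + 1)) :
    x ^ 2 - b * x - a < 0 := by
  have hc : 0 < |b| + a + 1 := by positivity
  rw [le_div_iff₀ hc] at hx
  nlinarith [abs_nonneg x, abs_nonneg b, sq_abs x, neg_abs_le (b * x), abs_mul b x]

theorem sq_sub_mul_sub_pos {a b x : ℝ} (ha : 0 < a) (hx : |b| + a + 1 ≤ |x|) :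
    0 < x ^ 2 - b * x - a := by
  nlinarith [abs_nonneg x, abs_nonneg b, sq_abs x, le_abs_self (b * x), abs_mul b x]

theorem tendsto_eval_add_C_mul {R : Type*} [CommSemiring R] [TopologicalSpace R]
    [IsTopologicalSemiring R] (p g : R[X]) (x : R) :
    Tendsto (fun ε => (p + C ε * g).eval x) (𝓝 0) (𝓝 (p.eval x)) := by
  have : Continuous fun ε => (p + C ε * g).eval x := by
    simp only [eval_add, eval_mul, eval_C]
    fun_prop
  simpa using this.tendsto 0

theorem eventually_exists_roots_X_mul_add_C_mul {a b : ℝ} (ha : 0 < a) {g : ℝ[X]}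
    (hg : g.natDegree < 3) (hg0 : g.eval 0 < 0) :
    ∀ᶠ ε in 𝓝[>] 0, ∃ l1 l2 l3 : ℝ, l1 < l2 ∧ l2 < 0 ∧ 0 < l3 ∧ 0 < l2 + l3 ∧
      X * (X ^ 2 - C b * X - C a) + C ε * g = (X - C l1) * (X - C l2) * (X - C l3) := by
  have hp_deg : (X * (X ^ 2 - C b * X - C a) : ℝ[X]).IsMonicOfDegree 3 :=
    ⟨by compute_degree!, by monicity!⟩
  set p : ℝ[X] := X * (X ^ 2 - C b * X - C a)
  set c := |b| + a + 1
  set η := a / c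
  have hc : 1 < c := by linarith [abs_nonneg b]
  have hη : 0 < η := by positivity
  have hηc : η < c := ((div_lt_one (by positivity)).mpr (by linarith [abs_nonneg b])).trans hc
  have hp : ∀ x, p.eval x = x * (x ^ 2 - b * x - a) := fun x => by simp [p]
  have hsigns : p.eval (-c) < 0 ∧ 0 < p.eval (-η) ∧ p.eval η < 0 ∧ 0 < p.eval c := by
    simp only [hp]
    exact ⟨mul_neg_of_neg_of_pos (by linarith)
        (sq_sub_mul_sub_pos ha (by rw [abs_neg]; exact le_abs_self c)),
      mul_pos_of_neg_of_neg (by linarith)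
        (sq_sub_mul_sub_neg ha (by rw [abs_neg, abs_of_pos hη])),
      mul_neg_of_pos_of_neg hη (sq_sub_mul_sub_neg ha (abs_of_pos hη).le),
      mul_pos (by linarith) (sq_sub_mul_sub_pos ha (le_abs_self c))⟩
  obtain ⟨hc_neg, hη_neg, hη_pos, hc_pos⟩ := hsigns
  have htendsto (x : ℝ) :=
    (tendsto_eval_add_C_mul p g x).mono_left (nhdsWithin_le_nhds (s := Set.Ioi 0))
  filter_upwards [self_mem_nhdsWithin, (htendsto (-c)).eventually_lt_const hc_neg,
    (htendsto (-η)).eventually_const_lt hη_neg, (htendsto η).eventually_lt_const hη_pos,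
    (htendsto c).eventually_const_lt hc_pos] with ε (hε : 0 < ε) h1 h2 h3 h4
  refine exists_roots_of_sign_changes (hp_deg.add_right ((natDegree_C_mul_le ε g).trans_lt hg))
    hη hηc h1 h2 ?_ h3 h4
  simpa [p] using mul_neg_of_pos_of_neg hε hg0

theorem stmt12_general (r D μ u2 s : ℝ) (hD : 0 < D)
    (hu2 : u2 ∈ Set.Ioo (6/5 : ℝ) (4/3)) (hru : 0 < r + u2 - 2) (hs : s < u2) :
    let q2 : ℝ := 1 + Real.sqrt ((r + u2 - 2) / (r + 1/10))
    let J : ℝ → Matrix (Fin 3) (Fin 3) ℝ := fun ε =>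
      Matrix.of ![![0, 1, 0],
                  ![2*(r + 1/10)*q2*(q2 - 1)/D, (u2 + μ)/D, -q2/D],
                  ![2*ε*(1 - u2)/(u2 - s), 0, -ε*(1 + 2*q2)/(u2 - s)]]
    ∃ ε₀ > 0, ∀ ε ∈ Set.Ioo 0 ε₀,
      ∃ l1 l2 l3 : ℝ, l1 < l2 ∧ l2 < 0 ∧ 0 < l3 ∧ 0 < l2 + l3 ∧
        (J ε).charpoly = (X - C l1) * (X - C l2) * (X - C l3) := by
  intro q2 J
  obtain ⟨hu2_gt, hu2_lt⟩ := hu2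
  have hq2 : 1 < q2 := lt_add_of_pos_right 1 (Real.sqrt_pos.mpr (div_pos hru (by linarith)))
  set a := 2*(r + 1/10)*q2*(q2 - 1)/D
  set b := (u2 + μ)/D
  set e := (1 + 2*q2)/(u2 - s)
  set w := -q2/D * (2*(1 - u2)/(u2 - s))
  have ha : 0 < a := div_pos (mul_pos (by nlinarith) (by linarith)) hD
  have he : 0 < e := div_pos (by linarith) (by linarith)
  have hw : 0 < w := mul_pos_of_neg_of_neg (div_neg_of_neg_of_pos (by linarith) hD)
    (div_neg_of_neg_of_pos (by linarith) (by linarith))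
  set g : ℝ[X] := C e * (X ^ 2 - C b * X - C a) - C w
  have hg : g.natDegree < 3 := Nat.lt_succ_of_le (by simp only [g]; compute_degree!)
  have hg0 : g.eval 0 < 0 := by
    simp only [g, eval_sub, eval_mul, eval_C, eval_pow, eval_X]
    nlinarith
  have hJ (ε : ℝ) : (J ε).charpoly = X * (X ^ 2 - C b * X - C a) + C ε * g := by
    rw [charpoly_of_sparse_fin_three, show -ε*(1 + 2*q2)/(u2 - s) = -(ε * e) by ring,
      show -q2/D * (2*ε*(1 - u2)/(u2 - s)) = ε * w by ring]
    simp only [g, map_neg, map_mul]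
    ring
  obtain ⟨ε₀, hε₀, hroots⟩ := mem_nhdsGT_iff_exists_Ioo_subset.mp <|
    eventually_exists_roots_X_mul_add_C_mul ha hg hg0
  exact ⟨ε₀, hε₀, fun ε hε => by simpa only [hJ, Set.mem_ofPred_eq] using hroots hε⟩

theorem stmt12 (r D μ u2 s : ℝ) (hr : 2/3 < r) (hD : 0 < D)
    (hu2 : u2 ∈ Set.Ioo (6/5 : ℝ) (4/3)) (hru : 0 < r + u2 - 2) (hs : s < u2) :
    let q2 : ℝ := 1 + Real.sqrt ((r + u2 - 2) / (r + 1/10))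
    let J : ℝ → Matrix (Fin 3) (Fin 3) ℝ := fun ε =>
      Matrix.of ![![0, 1, 0],
                  ![2*(r + 1/10)*q2*(q2 - 1)/D, (u2 + μ)/D, -q2/D],
                  ![2*ε*(1 - u2)/(u2 - s), 0, -ε*(1 + 2*q2)/(u2 - s)]]
    ∃ ε₀ > 0, ∀ ε ∈ Set.Ioo 0 ε₀,
      ∃ l1 l2 l3 : ℝ, l1 < l2 ∧ l2 < 0 ∧ 0 < l3 ∧ 0 < l2 + l3 ∧
        (J ε).charpoly = (X - C l1) * (X - C l2) * (X - C l3) :=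
  stmt12_general r D μ u2 s hD hu2 hru hs
end
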